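/- arXiv:2505.06769 — 3 statements merged into one kernel-verified Lean document; each statement's English description precedes it below -/
import Mathlib

section
/- Let P be an MDP with absorbing target set T and weight function w : T → [0,∞), with reachability value val_P(s) := max over positional strategies σ of val_{P_σ}(s). Let σ be an optimal positional strategy, i.e., val_{P_σ}(s) = val_P(s) for all s, such that in the induced Markov chain P_σ every state can reach T along edges, and let k ≥ 1 be the number of levels of P_σ. Let v̲_0 be the vector with v̲_0(s) = w(s) for s ∈ T and v̲_0(s) = 0 otherwise. Then for every integer t ≥ 1, every 0 ≤ i ≤ k, and every state s in level ℓ_i of P_σ: val_P(s) − (L_P^{k·t} v̲_0)(s) ≤ (1 − p_min^i)·(1 − p_min^k)^{t−1}·w_max, where w_max := max_{t ∈ T} w(t). -/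
/-- A finite Markov chain: transition function `δ` (nonnegative, rows sum to 1)
together with a set `T` of absorbing target states. There is an edge `s → s'`
iff `δ s s' > 0`. -/
structure MC (S : Type) [Fintype S] [DecidableEq S] where
  δ : S → S → ℝ
  T : Finset S
  nonneg : ∀ s s' : S, 0 ≤ δ s s'
  rowsum : ∀ s : S, ∑ s' : S, δ s s' = 1
  absorbing : ∀ t ∈ T, δ t t = 1

variable {S : Type} [Fintype S] [DecidableEq S]

/-- Edge relation of a Markov chain: `s → s'` iff `δ s s' > 0`. -/
def MC.edge (M : MC S) (a b : S) : Prop := 0 < M.δ a b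

/-- `pathLen r n a b`: there is a path of length `n` from `a` to `b` along `r`. -/
def pathLen (r : S → S → Prop) : ℕ → S → S → Prop
  | 0 => fun a b => a = b
  | n + 1 => fun a c => ∃ b, r a b ∧ pathLen r n b c

/-- `reaches r A s`: `s` can reach the set `A` along the relation `r`. -/
def reaches (r : S → S → Prop) (A : Set S) (s : S) : Prop :=
  ∃ n, ∃ a ∈ A, pathLen r n s a

/-- Length of a shortest path from `s` to the set `A` along `r`. -/
noncomputable def distTo (r : S → S → Prop) (A : Set S) (s : S) : ℕ :=
  sInf {n | ∃ a ∈ A, pathLen r n s a}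

/-- Level `0`: the targets together with all states that cannot reach the targets. -/
def MC.level0 (M : MC S) : Set S :=
  {s | s ∈ M.T ∨ ¬ reaches M.edge (M.T : Set S) s}

/-- The levels of a Markov chain: `ℓ_0` is `level0`, and for `i ≥ 1`, `ℓ_i` is the
set of states whose shortest edge-path distance to `ℓ_0` is exactly `i`. -/
noncomputable def MC.levelSet (M : MC S) : ℕ → Set S
  | 0 => M.level0
  | i + 1 => {s | distTo M.edge M.level0 s = i + 1}

/-- `M` has (exactly) `k` levels: `ℓ_k` is the last nonempty level. -/
def MC.hasLevels (M : MC S) (k : ℕ) : Prop :=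
  (M.levelSet k).Nonempty ∧ ∀ i, k < i → M.levelSet i = ∅

/-- One-step transition matrix of the Markov chain. -/
noncomputable def MC.P (M : MC S) : Matrix S S ℝ := Matrix.of M.δ

/-- Weighted reachability value `val(s) = E_s[w(X_{t*}) · 1{t* < ∞}]`, where `t*` is
the first hitting time of `T`. Since `T` is absorbing, this equals the supremum
(monotone limit) over `n` of `∑_{t ∈ T} (δⁿ)(s,t)·w(t)`. -/
noncomputable def MC.reachVal (M : MC S) (w : S → ℝ) (s : S) : ℝ :=
  ⨆ n : ℕ, ∑ t ∈ M.T, (M.P ^ n) s t * w t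

/-- Stochastic shortest path value `val(s) = E_s[∑_{t=0}^{t*} w(X_t)]`, where `t*` is
the first hitting time of `T`: the expected weight collected strictly before `T`
(states outside `T`, counted via the `n`-step distributions) plus the expected weight
of the first target state hit. -/
noncomputable def MC.sspVal (M : MC S) (w : S → ℝ) (s : S) : ℝ :=
  (∑' n : ℕ, ∑ s' ∈ Finset.univ.filter (fun x => x ∉ M.T), (M.P ^ n) s s' * w s')
    + M.reachVal w s

/-- Smallest positive transition probability of the Markov chain. -/
noncomputable def MC.pmin (M : MC S) : ℝ :=
  sInf {p : ℝ | 0 < p ∧ ∃ s s' : S, M.δ s s' = p}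

/-- Reachability Bellman update. -/
noncomputable def MC.reachUpdate (M : MC S) (w : S → ℝ) (v : S → ℝ) : S → ℝ :=
  fun s => if s ∈ M.T then w s else ∑ s' : S, M.δ s s' * v s'

/-- SSP Bellman update. -/
noncomputable def MC.sspUpdate (M : MC S) (w : S → ℝ) (v : S → ℝ) : S → ℝ :=
  fun s => if s ∈ M.T then w s else w s + ∑ s' : S, M.δ s s' * v s'

/-- The reduced Markov chain `M[s = ·]`: the state `s` is made absorbing (its row of
`δ` replaced by the point mass at `s`) and added to the target set. -/
def MC.reduce (M : MC S) (s : S) : MC S where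
  δ := fun a b => if a = s then (if b = s then 1 else 0) else M.δ a b
  T := insert s M.T
  nonneg := by
    intro a b
    by_cases h : a = s
    · by_cases h' : b = s <;> simp [h, h']
    · simpa [h] using M.nonneg a b
  rowsum := by
    intro a
    by_cases h : a = s
    · simp [h]
    · simpa [h] using M.rowsum a
  absorbing := by
    intro t ht
    rcases Finset.mem_insert.mp ht with h | h
    · simp [h]
    · by_cases h' : t = s
      · simp [h']
      · simpa [h'] using M.absorbing t h

/-- Probability, in `M`, of ever visiting the state `s` when starting from `a`,
i.e. `P_a(∃ t ≥ 0, X_t = s)` (computed as a reachability value after making `s`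
absorbing, which does not change the dynamics before the first visit to `s`). -/
noncomputable def MC.hitProb (M : MC S) (a s : S) : ℝ :=
  (M.reduce s).reachVal (fun b => if b = s then 1 else 0) a

/-- Probability of having reached `T` within `i` steps, `P_s(∃ t ≤ i, X_t ∈ T)`;
since `T` is absorbing this equals `∑_{t ∈ T} (δ^i)(s,t)`. -/
noncomputable def MC.hitBy (M : MC S) (s : S) (i : ℕ) : ℝ :=
  ∑ t ∈ M.T, (M.P ^ i) s t

/-- A finite Markov decision process: states are partitioned into decision states
`Sd` and probabilistic states (the complement of `Sd`); every state `s` has a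
nonempty successor set `E s`; every probabilistic state carries a probability
distribution `δ s` supported exactly on `E s`; and `T` is an absorbing target set. -/
structure MDP (S : Type) [Fintype S] [DecidableEq S] where
  Sd : Finset S
  E : S → Finset S
  δ : S → S → ℝ
  E_nonempty : ∀ s : S, (E s).Nonempty
  nonneg : ∀ s s' : S, 0 ≤ δ s s'
  rowsum : ∀ s ∉ Sd, ∑ s' ∈ E s, δ s s' = 1
  support : ∀ s ∉ Sd, ∀ s' : S, (0 < δ s s' ↔ s' ∈ E s)
  T : Finset S
  T_absorbing : ∀ t ∈ T, E t = {t}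

variable {S : Type} [Fintype S] [DecidableEq S]

/-- The MDP reachability Bellman operator `L_P`. -/
noncomputable def MDP.update (P : MDP S) (w : S → ℝ) (v : S → ℝ) : S → ℝ :=
  fun s =>
    if s ∈ P.T then w s
    else if s ∈ P.Sd then (P.E s).sup' (P.E_nonempty s) v
    else ∑ s' ∈ P.E s, P.δ s s' * v s'

/-- The Bellman operator `L_σ` induced by a positional strategy `σ`: at non-target
decision states, the maximum over successors is replaced by evaluation at `σ s`. -/
noncomputable def MDP.stratUpdate (P : MDP S) (σ : S → S) (w : S → ℝ) (v : S → ℝ) :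
    S → ℝ :=
  fun s =>
    if s ∈ P.T then w s
    else if s ∈ P.Sd then v (σ s)
    else ∑ s' ∈ P.E s, P.δ s s' * v s'

/-- The Markov chain `P_σ` induced by a positional strategy `σ` (decision states move
deterministically to `σ s`; probabilistic states keep their distribution). -/
def MDP.toMC (P : MDP S) (σ : S → S) (hσ : ∀ s ∈ P.Sd, σ s ∈ P.E s) : MC S where
  δ := fun a b => if a ∈ P.Sd then (if b = σ a then 1 else 0) else P.δ a b
  T := P.T
  nonneg := by
    intro a b
    by_cases h : a ∈ P.Sd
    · by_cases h' : b = σ a <;> simp [h, h']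
    · simpa [h] using P.nonneg a b
  rowsum := by
    intro a
    by_cases h : a ∈ P.Sd
    · simp [h]
    · have h2 := P.rowsum a h
      have h3 : ∑ s' : S, P.δ a s' = ∑ s' ∈ P.E a, P.δ a s' := by
        symm
        apply Finset.sum_subset (Finset.subset_univ _)
        intro b _ hb
        by_contra hne
        exact hb ((P.support a h b).mp (lt_of_le_of_ne (P.nonneg a b) (Ne.symm hne)))
      simp only [h, if_false]
      rw [h3, h2]
  absorbing := by
    intro t ht
    have hE : P.E t = {t} := P.T_absorbing t ht
    by_cases h : t ∈ P.Sd
    · have hσt : σ t = t := by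
        have h2 := hσ t h
        rw [hE, Finset.mem_singleton] at h2
        exact h2
      simp [h, hσt]
    · have h2 := P.rowsum t h
      rw [hE, Finset.sum_singleton] at h2
      simp [h, h2]

/-- The reachability value of the MDP: the maximum over positional strategies of the
reachability value of the induced Markov chain. -/
noncomputable def MDP.val (P : MDP S) (w : S → ℝ) (s : S) : ℝ :=
  ⨆ σ : {σ : S → S // ∀ a ∈ P.Sd, σ a ∈ P.E a}, (P.toMC σ.1 σ.2).reachVal w s

/-- Smallest positive transition probability of the MDP. -/
noncomputable def MDP.pmin (P : MDP S) : ℝ :=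
  sInf {p : ℝ | 0 < p ∧ ∃ s : S, s ∉ P.Sd ∧ ∃ s' : S, P.δ s s' = p}

/-!
Value iteration from `v̲₀` dominates the `n`-step value `∑_{t ∈ T} P_σⁿ(s,t) w(t)` of the optimal
chain `P_σ`, and that falls short of `val_P(s)` by at most `w_max` times the probability of not
having hit `T` within `n` steps. A state of level `i` reaches `T` along a path of `i` edges, each
of probability at least `p_min`, and every state lies in a level `≤ k`; by the Markov property the
probability of missing `T` during `i + k j` steps is therefore at most
`(1 - p_min^i) (1 - p_min^k)^j`.
-/

lemma exists_pathLen_distTo {α : Type} {r : α → α → Prop} {A : Set α} {s : α}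
    (h : reaches r A s) : ∃ a ∈ A, pathLen r (distTo r A s) s a :=
  Nat.sInf_mem (s := {n | ∃ a ∈ A, pathLen r n s a}) h

namespace MC

variable (M : MC S)

noncomputable def reachValUpTo (w : S → ℝ) (n : ℕ) (s : S) : ℝ :=
  ∑ t ∈ M.T, (M.P ^ n) s t * w t

lemma P_apply (a b : S) : M.P a b = M.δ a b := rfl

lemma pow_apply_nonneg (n : ℕ) (a b : S) : 0 ≤ (M.P ^ n) a b := by
  induction n generalizing a b with
  | zero => rw [pow_zero, Matrix.one_apply]; split <;> norm_num
  | succ n ih =>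
    rw [pow_succ, Matrix.mul_apply]
    exact Finset.sum_nonneg fun c _ => mul_nonneg (ih a c) (M.nonneg c b)

lemma sum_pow_apply (n : ℕ) (a : S) : ∑ b, (M.P ^ n) a b = 1 := by
  induction n generalizing a with
  | zero => simp [Matrix.one_apply]
  | succ n ih =>
    simp only [pow_succ, Matrix.mul_apply]
    rw [Finset.sum_comm]
    simp [← Finset.mul_sum, P_apply, M.rowsum, ih]

lemma δ_of_mem {t : S} (ht : t ∈ M.T) (b : S) : M.δ t b = if b = t then 1 else 0 := by
  split_ifs with hb
  · exact hb ▸ M.absorbing t ht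
  · have hrest : ∑ c ∈ Finset.univ.erase t, M.δ t c = 0 := by
      have := Finset.add_sum_erase Finset.univ (M.δ t) (Finset.mem_univ t)
      rw [M.rowsum, M.absorbing t ht] at this
      linarith
    exact (Finset.sum_eq_zero_iff_of_nonneg fun c _ => M.nonneg t c).mp hrest b
      (Finset.mem_erase.mpr ⟨hb, Finset.mem_univ b⟩)

lemma pow_apply_of_mem {t : S} (ht : t ∈ M.T) (n : ℕ) (b : S) :
    (M.P ^ n) t b = if b = t then 1 else 0 := by
  induction n with
  | zero => simp [Matrix.one_apply, eq_comm]
  | succ n ih => simp [pow_succ', Matrix.mul_apply, P_apply, M.δ_of_mem ht, ih]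

lemma reachValUpTo_of_mem (w : S → ℝ) (n : ℕ) {t : S} (ht : t ∈ M.T) :
    M.reachValUpTo w n t = w t := by
  simp [reachValUpTo, M.pow_apply_of_mem ht, ht]

lemma hitBy_eq_reachValUpTo (s : S) (n : ℕ) : M.hitBy s n = M.reachValUpTo 1 n s := by
  simp [hitBy, reachValUpTo]

lemma reachValUpTo_add (w : S → ℝ) (m n : ℕ) (s : S) :
    M.reachValUpTo w (m + n) s = ∑ s', (M.P ^ m) s s' * M.reachValUpTo w n s' := by
  simp only [reachValUpTo, pow_add, Matrix.mul_apply, Finset.sum_mul, Finset.mul_sum]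
  rw [Finset.sum_comm]
  simp only [mul_assoc]

lemma reachValUpTo_add_eq (w : S → ℝ) (m n : ℕ) (s : S) :
    M.reachValUpTo w (m + n) s
      = M.reachValUpTo w m s + ∑ s' ∈ M.Tᶜ, (M.P ^ m) s s' * M.reachValUpTo w n s' := by
  rw [reachValUpTo_add, ← Finset.sum_add_sum_compl M.T]
  congr 1
  exact Finset.sum_congr rfl fun t ht => by rw [M.reachValUpTo_of_mem w n ht]

lemma one_sub_hitBy (s : S) (n : ℕ) : 1 - M.hitBy s n = ∑ s' ∈ M.Tᶜ, (M.P ^ n) s s' := by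
  rw [← M.sum_pow_apply n s, ← Finset.sum_add_sum_compl M.T, hitBy, add_sub_cancel_left]

lemma hitBy_le_one (s : S) (n : ℕ) : M.hitBy s n ≤ 1 := by
  have := M.one_sub_hitBy s n
  linarith [Finset.sum_nonneg fun s' (_ : s' ∈ M.Tᶜ) => M.pow_apply_nonneg n s s']

lemma reachValUpTo_nonneg {w : S → ℝ} (hw : ∀ t ∈ M.T, 0 ≤ w t) (n : ℕ) (s : S) :
    0 ≤ M.reachValUpTo w n s :=
  Finset.sum_nonneg fun t ht => mul_nonneg (M.pow_apply_nonneg n s t) (hw t ht)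

lemma reachValUpTo_monotone {w : S → ℝ} (hw : ∀ t ∈ M.T, 0 ≤ w t) (s : S) :
    Monotone fun n => M.reachValUpTo w n s :=
  monotone_nat_of_le_succ fun n => by
    rw [M.reachValUpTo_add_eq w n 1]
    exact le_add_of_nonneg_right <| Finset.sum_nonneg fun s' _ =>
      mul_nonneg (M.pow_apply_nonneg n s s') (M.reachValUpTo_nonneg hw 1 s')

lemma hitBy_mono (s : S) {m n : ℕ} (h : m ≤ n) : M.hitBy s m ≤ M.hitBy s n := by
  simp only [hitBy_eq_reachValUpTo]
  exact M.reachValUpTo_monotone (fun _ _ => zero_le_one) s h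

lemma reachValUpTo_le {w : S → ℝ} {W : ℝ} (hW : ∀ t ∈ M.T, w t ≤ W) (hW0 : 0 ≤ W)
    (n : ℕ) (s : S) : M.reachValUpTo w n s ≤ W :=
  calc M.reachValUpTo w n s ≤ M.hitBy s n * W := by
        rw [hitBy, Finset.sum_mul]
        exact Finset.sum_le_sum fun t ht =>
          mul_le_mul_of_nonneg_left (hW t ht) (M.pow_apply_nonneg n s t)
    _ ≤ W := mul_le_of_le_one_left hW0 (M.hitBy_le_one s n)

lemma reachVal_le {w : S → ℝ} (hw : ∀ t ∈ M.T, 0 ≤ w t) {W : ℝ} (hW : ∀ t ∈ M.T, w t ≤ W)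
    (hW0 : 0 ≤ W) (m : ℕ) (s : S) :
    M.reachVal w s ≤ M.reachValUpTo w m s + (1 - M.hitBy s m) * W := by
  refine ciSup_le fun n => (M.reachValUpTo_monotone hw s (Nat.le_add_left n m)).trans ?_
  dsimp only
  rw [M.reachValUpTo_add_eq, M.one_sub_hitBy, Finset.sum_mul]
  gcongr with s' _
  · exact M.pow_apply_nonneg m s s'
  · exact M.reachValUpTo_le hW hW0 n s'

lemma one_sub_hitBy_add_le {q : ℝ} {k : ℕ} (hq : ∀ a, q ≤ M.hitBy a k) (s : S) (m : ℕ) :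
    1 - M.hitBy s (m + k) ≤ (1 - q) * (1 - M.hitBy s m) := by
  have hsplit := M.reachValUpTo_add_eq 1 m k s
  simp only [← hitBy_eq_reachValUpTo] at hsplit
  rw [M.one_sub_hitBy s m, Finset.mul_sum]
  have hmiss : ∑ s' ∈ M.Tᶜ, (M.P ^ m) s s' * (1 - M.hitBy s' k)
      ≤ ∑ s' ∈ M.Tᶜ, (1 - q) * (M.P ^ m) s s' :=
    Finset.sum_le_sum fun s' _ => by
      rw [mul_comm (1 - q)]
      exact mul_le_mul_of_nonneg_left (by linarith [hq s']) (M.pow_apply_nonneg m s s')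
  simp only [mul_sub, mul_one, Finset.sum_sub_distrib, ← M.one_sub_hitBy] at hmiss
  linarith

lemma one_sub_hitBy_add_mul_le {q : ℝ} {k : ℕ} (hq : ∀ a, q ≤ M.hitBy a k) (hq1 : q ≤ 1)
    (s : S) (i j : ℕ) : 1 - M.hitBy s (i + k * j) ≤ (1 - M.hitBy s i) * (1 - q) ^ j := by
  induction j with
  | zero => simp
  | succ j ih =>
    calc 1 - M.hitBy s (i + k * (j + 1)) ≤ (1 - q) * (1 - M.hitBy s (i + k * j)) := by
          rw [mul_add_one, ← add_assoc]
          exact M.one_sub_hitBy_add_le hq s _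
      _ ≤ (1 - q) * ((1 - M.hitBy s i) * (1 - q) ^ j) := by gcongr
      _ = (1 - M.hitBy s i) * (1 - q) ^ (j + 1) := by ring

lemma reachValUpTo_eq_iterate (w : S → ℝ) (n : ℕ) :
    M.reachValUpTo w n = (M.reachUpdate w)^[n] (fun a => if a ∈ M.T then w a else 0) := by
  induction n with
  | zero => ext s; simp [reachValUpTo, Matrix.one_apply]
  | succ n ih =>
    ext s
    rw [Function.iterate_succ_apply', ← ih, reachUpdate]
    split_ifs with hs
    · exact M.reachValUpTo_of_mem w _ hs
    · simp [add_comm n 1, M.reachValUpTo_add, P_apply]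


lemma pow_le_pow_apply_of_pathLen {p : ℝ} (hp : 0 ≤ p) (hpδ : ∀ a b, M.edge a b → p ≤ M.δ a b)
    {n : ℕ} {a b : S} (h : pathLen M.edge n a b) : p ^ n ≤ (M.P ^ n) a b := by
  induction n generalizing a with
  | zero => simp [show a = b from h]
  | succ n ih =>
    obtain ⟨c, hac, hcb⟩ := h
    calc p ^ (n + 1) = p * p ^ n := pow_succ' p n
      _ ≤ M.P a c * (M.P ^ n) c b :=
          mul_le_mul (hpδ a c hac) (ih hcb) (pow_nonneg hp n) (M.nonneg a c)
      _ ≤ (M.P ^ (n + 1)) a b := by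
          rw [pow_succ', Matrix.mul_apply]
          exact Finset.single_le_sum (f := fun c => M.P a c * (M.P ^ n) c b)
            (fun c _ => mul_nonneg (M.nonneg a c) (M.pow_apply_nonneg n c b))
            (Finset.mem_univ c)

lemma pow_le_hitBy_of_pathLen {p : ℝ} (hp : 0 ≤ p) (hpδ : ∀ a b, M.edge a b → p ≤ M.δ a b)
    {n : ℕ} {a t : S} (ht : t ∈ M.T) (h : pathLen M.edge n a t) : p ^ n ≤ M.hitBy a n :=
  (M.pow_le_pow_apply_of_pathLen hp hpδ h).trans <|
    Finset.single_le_sum (fun t _ => M.pow_apply_nonneg n a t) ht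

lemma level0_eq_T {M : MC S} (hreach : ∀ a, reaches M.edge (M.T : Set S) a) :
    M.level0 = M.T := by
  ext a
  simp [level0, hreach a]

lemma mem_levelSet_iff {M : MC S} (hreach : ∀ a, reaches M.edge (M.T : Set S) a)
    {i : ℕ} {s : S} :
    s ∈ M.levelSet i ↔ distTo M.edge (M.T : Set S) s = i := by
  cases i with
  | zero =>
    obtain ⟨a, ha, hpath⟩ := exists_pathLen_distTo (hreach s)
    simp only [levelSet, level0_eq_T hreach]
    constructor
    · intro hs
      exact Nat.eq_zero_of_le_zero (Nat.sInf_le ⟨s, hs, rfl⟩)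
    · intro h0
      rw [h0] at hpath
      exact (show s = a from hpath) ▸ ha
  | succ i => simp only [levelSet, level0_eq_T hreach, Set.mem_ofPred_eq]

lemma pow_le_hitBy_of_mem_levelSet {M : MC S}
    (hreach : ∀ a, reaches M.edge (M.T : Set S) a) {p : ℝ} (hp : 0 ≤ p)
    (hpδ : ∀ a b, M.edge a b → p ≤ M.δ a b) {i : ℕ} {s : S} (hs : s ∈ M.levelSet i) :
    p ^ i ≤ M.hitBy s i := by
  obtain ⟨a, ha, hpath⟩ := exists_pathLen_distTo (hreach s)
  rw [(mem_levelSet_iff hreach).mp hs] at hpath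
  exact M.pow_le_hitBy_of_pathLen hp hpδ ha hpath

lemma pow_le_hitBy_of_hasLevels {M : MC S}
    (hreach : ∀ a, reaches M.edge (M.T : Set S) a) {p : ℝ} (hp0 : 0 ≤ p) (hp1 : p ≤ 1)
    (hpδ : ∀ a b, M.edge a b → p ≤ M.δ a b) {k : ℕ} (hlev : M.hasLevels k) (a : S) :
    p ^ k ≤ M.hitBy a k := by
  have ha : a ∈ M.levelSet (distTo M.edge (M.T : Set S) a) := (mem_levelSet_iff hreach).mpr rfl
  have hdk : distTo M.edge (M.T : Set S) a ≤ k := by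
    by_contra! hk
    simp [hlev.2 _ hk] at ha
  calc p ^ k ≤ p ^ distTo M.edge (M.T : Set S) a := pow_le_pow_of_le_one hp0 hp1 hdk
    _ ≤ M.hitBy a _ := pow_le_hitBy_of_mem_levelSet hreach hp0 hpδ ha
    _ ≤ M.hitBy a k := M.hitBy_mono a hdk

end MC

namespace MDP

variable (P : MDP S)

lemma pmin_nonneg : 0 ≤ P.pmin :=
  Real.sInf_nonneg fun _ hp => hp.1.le

lemma bddBelow_pmin_set : BddBelow {p : ℝ | 0 < p ∧ ∃ s : S, s ∉ P.Sd ∧ ∃ s', P.δ s s' = p} :=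
  ⟨0, fun _ hp => hp.1.le⟩

lemma δ_le_one {s : S} (hs : s ∉ P.Sd) (s' : S) : P.δ s s' ≤ 1 := by
  by_cases hs' : s' ∈ P.E s
  · rw [← P.rowsum s hs]
    exact Finset.single_le_sum (fun c _ => P.nonneg s c) hs'
  · exact (not_lt.mp (mt (P.support s hs s').mp hs')).trans zero_le_one

lemma pmin_le_one : P.pmin ≤ 1 := by
  by_cases hne : {p : ℝ | 0 < p ∧ ∃ s : S, s ∉ P.Sd ∧ ∃ s', P.δ s s' = p}.Nonempty
  · obtain ⟨p, hp, s, hs, s', rfl⟩ := hne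
    exact (csInf_le P.bddBelow_pmin_set ⟨hp, s, hs, s', rfl⟩).trans (P.δ_le_one hs s')
  · rw [Set.not_nonempty_iff_eq_empty] at hne
    rw [pmin, hne, Real.sInf_empty]
    exact zero_le_one

variable {σ : S → S} (hσ : ∀ s ∈ P.Sd, σ s ∈ P.E s)

lemma toMC_T : (P.toMC σ hσ).T = P.T := rfl

lemma toMC_δ (a b : S) :
    (P.toMC σ hσ).δ a b = if a ∈ P.Sd then (if b = σ a then 1 else 0) else P.δ a b := rfl

lemma pmin_le_toMC_δ (a b : S) (hab : (P.toMC σ hσ).edge a b) :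
    P.pmin ≤ (P.toMC σ hσ).δ a b := by
  simp only [MC.edge, toMC_δ] at hab ⊢
  split_ifs at hab ⊢ with ha
  · exact P.pmin_le_one
  · exact (lt_irrefl 0 hab).elim
  · exact csInf_le P.bddBelow_pmin_set ⟨hab, a, ha, b, rfl⟩

lemma sum_univ_δ_mul {s : S} (hs : s ∉ P.Sd) (v : S → ℝ) :
    ∑ s', P.δ s s' * v s' = ∑ s' ∈ P.E s, P.δ s s' * v s' := by
  refine (Finset.sum_subset (Finset.subset_univ _) fun s' _ hs' => ?_).symm
  rw [le_antisymm (not_lt.mp (mt (P.support s hs s').mp hs')) (P.nonneg s s'), zero_mul]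

lemma update_monotone (w : S → ℝ) : Monotone (P.update w) := by
  intro v v' hv s
  simp only [update]
  split_ifs
  · exact le_refl (w s)
  · exact Finset.sup'_mono_fun fun s' _ => hv s'
  · exact Finset.sum_le_sum fun s' _ => mul_le_mul_of_nonneg_left (hv s') (P.nonneg s s')

lemma toMC_reachUpdate_le_update (w : S → ℝ) : (P.toMC σ hσ).reachUpdate w ≤ P.update w := by
  intro v s
  simp only [MC.reachUpdate, update, toMC_T, toMC_δ]
  by_cases hT : s ∈ P.T
  · simp [hT]
  by_cases hd : s ∈ P.Sd
  · simpa [hT, hd] using ⟨σ s, hσ s hd, le_rfl⟩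
  · simp [hT, hd, P.sum_univ_δ_mul hd v]

lemma reachValUpTo_toMC_le_update_iterate (w : S → ℝ) (n : ℕ) :
    (P.toMC σ hσ).reachValUpTo w n
      ≤ (P.update w)^[n] (fun a => if a ∈ P.T then w a else 0) := by
  rw [MC.reachValUpTo_eq_iterate]
  exact (P.update_monotone w).le_iterate_of_le (P.toMC_reachUpdate_le_update hσ w) n _

end MDP

theorem stmt_14_general {S : Type} [Fintype S] [DecidableEq S]
    (P : MDP S) (w : S → ℝ) (hw : ∀ t ∈ P.T, 0 ≤ w t)
    (σ : S → S) (hσ : ∀ s ∈ P.Sd, σ s ∈ P.E s)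
    (hopt : ∀ s : S, (P.toMC σ hσ).reachVal w s = P.val w s)
    (hreach : ∀ a : S, reaches (P.toMC σ hσ).edge ((P.T : Finset S) : Set S) a)
    (k : ℕ) (hlev : (P.toMC σ hσ).hasLevels k) :
    ∀ t : ℕ, 1 ≤ t → ∀ i : ℕ, i ≤ k → ∀ s ∈ (P.toMC σ hσ).levelSet i,
      P.val w s - (P.update w)^[k * t] (fun a => if a ∈ P.T then w a else 0) s
        ≤ (1 - P.pmin ^ i) * (1 - P.pmin ^ k) ^ (t - 1)
            * sSup (w '' ((P.T : Finset S) : Set S)) := by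
  intro t ht i hik s hs
  set M := P.toMC σ hσ
  set W := sSup (w '' ((P.T : Finset S) : Set S))
  have hWb : ∀ u ∈ P.T, w u ≤ W := fun u hu =>
    le_csSup (Set.toFinite _).bddAbove ⟨u, Finset.mem_coe.mpr hu, rfl⟩
  have hW0 : 0 ≤ W := by
    obtain ⟨-, u, hu, -⟩ := hreach s
    exact (hw u hu).trans (hWb u hu)
  have hpδ := P.pmin_le_toMC_δ hσ
  have hstart : P.pmin ^ i ≤ M.hitBy s i :=
    MC.pow_le_hitBy_of_mem_levelSet hreach P.pmin_nonneg hpδ hs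
  have hround : ∀ a, P.pmin ^ k ≤ M.hitBy a k :=
    MC.pow_le_hitBy_of_hasLevels hreach P.pmin_nonneg P.pmin_le_one hpδ hlev
  have hpk : P.pmin ^ k ≤ 1 := pow_le_one₀ P.pmin_nonneg P.pmin_le_one
  have hkt : i + k * (t - 1) ≤ k * t := by
    obtain ⟨t', rfl⟩ := Nat.exists_eq_add_of_le' ht
    simpa [mul_add, add_comm] using hik
  have hmiss : 1 - M.hitBy s (k * t) ≤ (1 - P.pmin ^ i) * (1 - P.pmin ^ k) ^ (t - 1) :=
    calc 1 - M.hitBy s (k * t) ≤ 1 - M.hitBy s (i + k * (t - 1)) := by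
          linarith [M.hitBy_mono s hkt]
      _ ≤ (1 - M.hitBy s i) * (1 - P.pmin ^ k) ^ (t - 1) :=
          M.one_sub_hitBy_add_mul_le hround hpk s i (t - 1)
      _ ≤ (1 - P.pmin ^ i) * (1 - P.pmin ^ k) ^ (t - 1) := by gcongr
  calc P.val w s - (P.update w)^[k * t] (fun a => if a ∈ P.T then w a else 0) s
      ≤ M.reachVal w s - M.reachValUpTo w (k * t) s := by
        rw [hopt]
        gcongr
        exact P.reachValUpTo_toMC_le_update_iterate hσ w (k * t) s
    _ ≤ (1 - M.hitBy s (k * t)) * W := by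
        linarith [M.reachVal_le hw hWb hW0 (k * t) s]
    _ ≤ _ := mul_le_mul_of_nonneg_right hmiss hW0

/-- Speed of convergence of value iteration for MDPs parametrized
by the levels of an optimal strategy: if `σ` is optimal and the induced Markov chain
`P_σ` (in which every state reaches `T`) has `k ≥ 1` levels, then after `k·t` Bellman
updates from the initial lower vector, for every state `s` in level `ℓ_i` of `P_σ`,
`val_P(s) - (L_P^{k·t} v̲_0)(s) ≤ (1 - p_min^i)·(1 - p_min^k)^(t-1)·w_max`. -/
theorem stmt_14 {S : Type} [Fintype S] [DecidableEq S] [Nonempty S]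
    (P : MDP S) (w : S → ℝ) (hw : ∀ t ∈ P.T, 0 ≤ w t)
    (σ : S → S) (hσ : ∀ s ∈ P.Sd, σ s ∈ P.E s)
    (hopt : ∀ s : S, (P.toMC σ hσ).reachVal w s = P.val w s)
    (hreach : ∀ a : S, reaches (P.toMC σ hσ).edge ((P.T : Finset S) : Set S) a)
    (k : ℕ) (hk : 1 ≤ k) (hlev : (P.toMC σ hσ).hasLevels k) :
    ∀ t : ℕ, 1 ≤ t → ∀ i : ℕ, i ≤ k → ∀ s ∈ (P.toMC σ hσ).levelSet i,
      P.val w s - (P.update w)^[k * t] (fun a => if a ∈ P.T then w a else 0) s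
        ≤ (1 - P.pmin ^ i) * (1 - P.pmin ^ k) ^ (t - 1)
            * sSup (w '' ((P.T : Finset S) : Set S)) :=
  stmt_14_general P w hw σ hσ hopt hreach k hlev
end

section
/- Let M be a Markov chain with targets T and weight function w : T → [0,∞), and suppose that the reachability Bellman update L of M has a unique fixpoint in ℝ^S. Then for every state s ∉ T and every real γ, the reachability Bellman update of the reduced MC M[s = γ] also has a unique fixpoint in ℝ^S. -/
variable {S : Type} [Fintype S] [DecidableEq S]

/-!
The fixpoints of the reachability update `L v = A v + b` form a translate of the kernel of
`1 - A`, so in finite dimension `L` has a unique fixpoint iff the homogeneous update (all target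
weights `0`) fixes only `0`. By a maximum principle, this happens iff every nonempty closed set of
states meets the targets: the maximizers of a harmonic function form a closed set, and conversely a
solution of `v = A v - 1` cannot attain its maximum over a closed set avoiding the targets.
A closed set of `M[s = γ]` that avoids `s` is closed in `M`, so the reduced chain inherits the
property.
-/

theorem LinearMap.existsUnique_add_eq_self_iff {K V : Type*} [Field K] [AddCommGroup V]
    [Module K V] [FiniteDimensional K V] (f : V →ₗ[K] V) (b : V) :
    (∃! v, f v + b = v) ↔ ∀ u, f u = u → u = 0 := by
  constructor
  · rintro ⟨v, hv, hvuniq⟩ u hu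
    have : v + u = v :=
      hvuniq (v + u) (show f (v + u) + b = v + u by rw [map_add, hu, add_right_comm, hv])
    simpa using this
  · intro hker
    have hinj : Function.Injective (LinearMap.id - f : V →ₗ[K] V) := by
      rw [← LinearMap.ker_eq_bot, LinearMap.ker_eq_bot']
      intro u hu
      exact hker u (sub_eq_zero.mp hu).symm
    obtain ⟨v, hv⟩ := LinearMap.injective_iff_surjective.mp hinj b
    have hv : f v + b = v := by rw [← hv]; simp
    refine ⟨v, hv, fun v' hv' => sub_eq_zero.mp (hker _ ?_)⟩
    calc f (v' - v) = (f v' + b) - (f v + b) := by rw [map_sub]; abel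
      _ = v' - v := by rw [hv', hv]

namespace MC

def IsClosedSet (M : MC S) (B : Set S) : Prop :=
  ∀ a ∈ B, ∀ b, M.δ a b ≠ 0 → b ∈ B

def ClosedSetsMeetTargets (M : MC S) : Prop :=
  ∀ B, M.IsClosedSet B → B.Nonempty → ∃ t ∈ B, t ∈ M.T

noncomputable def reachUpdateLin (M : MC S) : (S → ℝ) →ₗ[ℝ] S → ℝ where
  toFun := M.reachUpdate 0
  map_add' u v := by
    funext a
    by_cases ha : a ∈ M.T <;> simp [reachUpdate, ha, mul_add, Finset.sum_add_distrib]
  map_smul' c v := by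
    funext a
    by_cases ha : a ∈ M.T <;> simp [reachUpdate, ha, Finset.mul_sum, mul_left_comm]

theorem reachUpdate_eq_add (M : MC S) (w v : S → ℝ) :
    M.reachUpdate w v = M.reachUpdateLin v + M.reachUpdate w 0 := by
  funext a
  change _ = M.reachUpdate 0 v a + M.reachUpdate w 0 a
  by_cases ha : a ∈ M.T <;> simp [reachUpdate, ha]

theorem existsUnique_reachUpdate_eq_self_iff (M : MC S) (w : S → ℝ) :
    (∃! v, M.reachUpdate w v = v) ↔ ∀ u, M.reachUpdate 0 u = u → u = 0 := by
  have hfix : ∀ v, M.reachUpdate w v = v ↔ M.reachUpdateLin v + M.reachUpdate w 0 = v :=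
    fun v => by rw [reachUpdate_eq_add]
  simp only [hfix]
  exact M.reachUpdateLin.existsUnique_add_eq_self_iff _

theorem sum_mul_le_of_forall_le (M : MC S) {a : S} {v : S → ℝ} {c : ℝ}
    (hv : ∀ b, M.δ a b ≠ 0 → v b ≤ c) : ∑ b, M.δ a b * v b ≤ c :=
  calc ∑ b, M.δ a b * v b ≤ ∑ b, M.δ a b * c := Finset.sum_le_sum fun b _ => by
        by_cases hb : M.δ a b = 0
        · simp [hb]
        · exact mul_le_mul_of_nonneg_left (hv b hb) (M.nonneg a b)
    _ = c := by rw [← Finset.sum_mul, M.rowsum, one_mul]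

theorem eq_of_isMaxOn_of_harmonic (M : MC S) {u : S → ℝ} {a : S}
    (hmax : ∀ x, u x ≤ u a) (hu : u a = ∑ b, M.δ a b * u b) {b : S} (hb : M.δ a b ≠ 0) :
    u b = u a := by
  have hsum : ∑ x, M.δ a x * (u a - u x) = 0 := by
    simp only [mul_sub, Finset.sum_sub_distrib, ← Finset.sum_mul, M.rowsum, one_mul, ← hu,
      sub_self]
  have hterm := (Finset.sum_eq_zero_iff_of_nonneg fun x _ =>
    mul_nonneg (M.nonneg a x) (sub_nonneg.mpr (hmax x))).mp hsum b (Finset.mem_univ b)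
  linarith [(mul_eq_zero.mp hterm).resolve_left hb]

theorem ClosedSetsMeetTargets.exists_mem_T_le {M : MC S} (hclosed : M.ClosedSetsMeetTargets)
    {u : S → ℝ} (hu : ∀ a ∉ M.T, u a = ∑ b, M.δ a b * u b) (x : S) : ∃ t ∈ M.T, u x ≤ u t := by
  have : Nonempty S := ⟨x⟩
  obtain ⟨a, ha⟩ := Finite.exists_max u
  by_contra! hT
  have hmaxSet : M.IsClosedSet {y | u y = u a} := by
    intro y (hy : u y = u a) b hb
    have hyT : y ∉ M.T := fun hyT => (hT y hyT).not_ge (hy ▸ ha x)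
    exact (M.eq_of_isMaxOn_of_harmonic (hy ▸ ha) (hu y hyT) hb).trans hy
  obtain ⟨t, ht, htT⟩ := hclosed _ hmaxSet ⟨a, rfl⟩
  exact (hT t htT).not_ge ((ht : u t = u a) ▸ ha x)

theorem closedSetsMeetTargets_of_reachUpdate_zero (M : MC S)
    (hker : ∀ u, M.reachUpdate 0 u = u → u = 0) : M.ClosedSetsMeetTargets := by
  intro B hB hne
  obtain ⟨v, hv⟩ :=
    ((M.reachUpdateLin.existsUnique_add_eq_self_iff fun _ => -1).mpr hker).exists
  obtain ⟨a, haB, hmax⟩ := Set.exists_max_image B v B.toFinite hne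
  refine ⟨a, haB, by_contra fun haT => ?_⟩
  have hva : ∑ b, M.δ a b * v b - 1 = v a := by
    simpa [reachUpdateLin, reachUpdate, haT, sub_eq_add_neg] using congrFun hv a
  have := M.sum_mul_le_of_forall_le fun b hb => hmax b (hB a haB b hb)
  linarith

theorem ClosedSetsMeetTargets.eq_zero_of_reachUpdate_zero_eq_self {M : MC S}
    (hclosed : M.ClosedSetsMeetTargets) {u : S → ℝ} (hu : M.reachUpdate 0 u = u) : u = 0 := by
  have hT : ∀ t ∈ M.T, u t = 0 := fun t ht => by
    simpa [reachUpdate, ht] using (congrFun hu t).symm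
  have hharm : ∀ a ∉ M.T, u a = ∑ b, M.δ a b * u b := fun a ha => by
    simpa [reachUpdate, ha] using (congrFun hu a).symm
  funext x
  obtain ⟨t, ht, hle⟩ := hclosed.exists_mem_T_le hharm x
  obtain ⟨t', ht', hge⟩ := hclosed.exists_mem_T_le (u := -u)
    (fun a ha => by simp [hharm a ha, Finset.sum_neg_distrib]) x
  simp only [Pi.neg_apply, neg_le_neg_iff, hT t' ht'] at hge
  rw [hT t ht] at hle
  exact le_antisymm hle hge

theorem existsUnique_reachUpdate_eq_self_iff_closedSetsMeetTargets (M : MC S) (w : S → ℝ) :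
    (∃! v, M.reachUpdate w v = v) ↔ M.ClosedSetsMeetTargets := by
  rw [existsUnique_reachUpdate_eq_self_iff]
  exact ⟨M.closedSetsMeetTargets_of_reachUpdate_zero,
    fun hclosed _ => hclosed.eq_zero_of_reachUpdate_zero_eq_self⟩

theorem IsClosedSet.of_reduce {M : MC S} {s : S} {B : Set S} (hB : (M.reduce s).IsClosedSet B)
    (hs : s ∉ B) : M.IsClosedSet B := by
  intro a ha b hab
  refine hB a ha b ?_
  change (if a = s then _ else M.δ a b) ≠ 0
  rwa [if_neg (ne_of_mem_of_not_mem ha hs)]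

theorem ClosedSetsMeetTargets.reduce {M : MC S} (hclosed : M.ClosedSetsMeetTargets) (s : S) :
    (M.reduce s).ClosedSetsMeetTargets := by
  intro B hB hne
  by_cases hs : s ∈ B
  · exact ⟨s, hs, Finset.mem_insert_self s M.T⟩
  · obtain ⟨t, htB, ht⟩ := hclosed B (hB.of_reduce hs) hne
    exact ⟨t, htB, Finset.mem_insert_of_mem ht⟩

end MC

theorem stmt_15_general {S : Type} [Fintype S] [DecidableEq S]
    (M : MC S) (w : S → ℝ)
    (huniq : ∃! v : S → ℝ, M.reachUpdate w v = v)
    (s : S) (γ : ℝ) :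
    ∃! v : S → ℝ, (M.reduce s).reachUpdate (Function.update w s γ) v = v := by
  rw [MC.existsUnique_reachUpdate_eq_self_iff_closedSetsMeetTargets] at huniq ⊢
  exact huniq.reduce s

/-- If the reachability Bellman update of `M` has a unique fixpoint,
then for every non-target state `s` and every real `γ` the reachability Bellman
update of the reduced Markov chain `M[s = γ]` also has a unique fixpoint. -/
theorem stmt_15 {S : Type} [Fintype S] [DecidableEq S] [Nonempty S]
    (M : MC S) (w : S → ℝ) (hw : ∀ t ∈ M.T, 0 ≤ w t)
    (huniq : ∃! v : S → ℝ, M.reachUpdate w v = v)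
    (s : S) (hs : s ∉ M.T) (γ : ℝ) :
    ∃! v : S → ℝ, (M.reduce s).reachUpdate (Function.update w s γ) v = v :=
  stmt_15_general M w huniq s γ
end

section
/- Let M be a Markov chain with absorbing targets T and weight function w : S → (0,∞) such that every state can reach T along edges. Then the SSP Bellman update has a unique fixpoint in ℝ^S, and this fixpoint equals the stochastic shortest path value vector of M. -/
variable {S : Type} [Fintype S] [DecidableEq S]

/-!
If every state can reach `T`, then from every state `T` is hit with positive probability within
some uniform number `N` of steps, so the probability `survivalProb n s` of not being absorbed at
time `n` decays geometrically in `n`. This makes the expected weight collected outside `T`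
summable, and the series, together with the monotone limit defining `reachVal`, satisfies the
Bellman equation. Conversely, the difference `d` of two fixpoints vanishes on `T` and satisfies
`P d = d`, hence `|d s| = |(Pⁿ d) s| ≤ (∑ₖ |d k|) · survivalProb n s → 0`.
-/

open Filter Topology Matrix

theorem Matrix.abs_mulVec_le {m n : Type*} [Fintype n] {A : Matrix m n ℝ}
    (hA : ∀ i j, 0 ≤ A i j) {v u : n → ℝ} (h : ∀ j, |v j| ≤ u j) (i : m) :
    |(A *ᵥ v) i| ≤ (A *ᵥ u) i :=
  calc |(A *ᵥ v) i| ≤ ∑ j, |A i j * v j| := Finset.abs_sum_le_sum_abs _ _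
    _ = ∑ j, A i j * |v j| := by simp only [abs_mul, abs_of_nonneg (hA _ _)]
    _ ≤ (A *ᵥ u) i := Finset.sum_le_sum fun j _ => mul_le_mul_of_nonneg_left (h j) (hA i j)

theorem Matrix.mulVec_eq_self_of_tendsto_pow_mulVec {n R : Type*} [Fintype n] [DecidableEq n]
    [Semiring R] [TopologicalSpace R] [IsTopologicalSemiring R] [T2Space R]
    {A : Matrix n n R} {v r : n → R} (h : Tendsto (fun k => A ^ k *ᵥ v) atTop (𝓝 r)) :
    A *ᵥ r = r := by
  have hA : Continuous fun x : n → R => A *ᵥ x := continuous_const.matrix_mulVec continuous_id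
  refine tendsto_nhds_unique ((hA.tendsto r).comp h) ?_
  simpa [Function.comp_def, pow_succ', ← mulVec_mulVec] using h.comp (tendsto_add_atTop_nat 1)

theorem Matrix.tsum_pow_mulVec_apply {n : Type*} [Fintype n] [DecidableEq n]
    {A : Matrix n n ℝ} {u : n → ℝ} (h : ∀ i, Summable fun k => (A ^ k *ᵥ u) i) (i : n) :
    ∑' k, (A ^ k *ᵥ u) i = u i + (A *ᵥ fun j => ∑' k, (A ^ k *ᵥ u) j) i := by
  rw [(h i).tsum_eq_zero_add, pow_zero, one_mulVec]
  congr 1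
  have hsucc (k : ℕ) : (A ^ (k + 1) *ᵥ u) i = ∑ j, A i j * (A ^ k *ᵥ u) j := by
    rw [pow_succ', ← mulVec_mulVec]; rfl
  simp only [hsucc]
  rw [Summable.tsum_finsetSum fun j _ => (h j).mul_left _]
  simp only [tsum_mul_left]
  rfl

theorem summable_pow_div {c : ℝ} (hc0 : 0 ≤ c) (hc1 : c < 1) (N : ℕ) [NeZero N] :
    Summable fun n : ℕ => c ^ (n / N) := by
  have h := (summable_geometric_of_lt_one hc0 hc1).mul_of_nonneg
    (Summable.of_finite (f := fun _ : Fin N => (1 : ℝ)))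
    (fun _ => pow_nonneg hc0 _) (fun _ => zero_le_one)
  simpa [Function.comp_def] using (Nat.divModEquiv N).summable_iff.mpr h

namespace MC

variable (M : MC S)

theorem P_mem_rowStochastic : M.P ∈ rowStochastic ℝ S :=
  mem_rowStochastic_iff_sum.2 ⟨M.nonneg, M.rowsum⟩

theorem pow_P_apply_nonneg (n : ℕ) (s s' : S) : 0 ≤ (M.P ^ n) s s' :=
  nonneg_of_mem_rowStochastic (pow_mem M.P_mem_rowStochastic n)

theorem δ_eq_zero_of_mem_T {t s : S} (ht : t ∈ M.T) (hs : s ≠ t) : M.δ t s = 0 := by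
  have hrest : ∑ k ∈ Finset.univ.erase t, M.δ t k = 0 := by
    linarith [Finset.add_sum_erase _ (M.δ t) (Finset.mem_univ t), M.rowsum t, M.absorbing t ht]
  exact (Finset.sum_eq_zero_iff_of_nonneg fun k _ => M.nonneg t k).1 hrest s
    (Finset.mem_erase.2 ⟨hs, Finset.mem_univ s⟩)

theorem P_mulVec_apply_of_mem_T {t : S} (ht : t ∈ M.T) (v : S → ℝ) :
    (M.P *ᵥ v) t = v t := by
  change ∑ s, M.δ t s * v s = v t
  rw [Finset.sum_eq_single t (fun s _ hs => by rw [M.δ_eq_zero_of_mem_T ht hs, zero_mul])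
    (by simp), M.absorbing t ht, one_mul]

theorem pow_P_mulVec_apply_of_mem_T {t : S} (ht : t ∈ M.T) (v : S → ℝ) (n : ℕ) :
    (M.P ^ n *ᵥ v) t = v t := by
  induction n with
  | zero => rw [pow_zero, one_mulVec]
  | succ n ih => rw [pow_succ', ← mulVec_mulVec, M.P_mulVec_apply_of_mem_T ht, ih]

theorem pow_P_apply_pos_of_pathLen {n : ℕ} {s t : S} (h : pathLen M.edge n s t) :
    0 < (M.P ^ n) s t := by
  induction n generalizing s with
  | zero => cases h; simp
  | succ n ih =>
    obtain ⟨b, hsb, hbt⟩ := h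
    rw [pow_succ', mul_apply]
    exact Finset.sum_pos' (fun k _ => mul_nonneg (M.nonneg s k) (M.pow_P_apply_nonneg n k t))
      ⟨b, Finset.mem_univ b, mul_pos hsb (ih hbt)⟩

noncomputable def survivalProb (n : ℕ) (s : S) : ℝ :=
  (M.P ^ n *ᵥ (M.T : Set S)ᶜ.indicator 1) s

theorem survivalProb_nonneg (n : ℕ) (s : S) : 0 ≤ M.survivalProb n s :=
  nonneg_mulVec_of_mem_rowStochastic (pow_mem M.P_mem_rowStochastic n)
    (fun _ => Set.indicator_nonneg (fun _ _ => zero_le_one) _) s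

theorem survivalProb_le_one (n : ℕ) (s : S) : M.survivalProb n s ≤ 1 := by
  have h := (M.P ^ n).abs_mulVec_le (M.pow_P_apply_nonneg n) (v := (M.T : Set S)ᶜ.indicator 1)
    (u := 1) (fun k => by by_cases hk : k ∈ (M.T : Set S)ᶜ <;> simp [hk]) s
  rw [one_vecMul_of_mem_rowStochastic (pow_mem M.P_mem_rowStochastic n)] at h
  exact (le_abs_self _).trans h

theorem survivalProb_of_mem_T {t : S} (ht : t ∈ M.T) (n : ℕ) : M.survivalProb n t = 0 := by
  simp [survivalProb, M.pow_P_mulVec_apply_of_mem_T ht, ht]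

theorem abs_pow_P_mulVec_le {v : S → ℝ} (hv : ∀ t ∈ M.T, v t = 0) {C : ℝ}
    (hC : ∀ s, |v s| ≤ C) (n : ℕ) (s : S) :
    |(M.P ^ n *ᵥ v) s| ≤ C * M.survivalProb n s := by
  rw [survivalProb, ← smul_eq_mul, ← Pi.smul_apply, ← mulVec_smul]
  refine (M.P ^ n).abs_mulVec_le (M.pow_P_apply_nonneg n) (fun k => ?_) s
  by_cases hk : k ∈ M.T <;> simp [hk, hv, hC]

theorem survivalProb_add_le {b : ℕ} {c : ℝ} (hc : ∀ s, M.survivalProb b s ≤ c)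
    (a : ℕ) (s : S) :
    M.survivalProb (a + b) s ≤ c * M.survivalProb a s := by
  have hv : ∀ t ∈ M.T, M.survivalProb b t = 0 := fun t ht => M.survivalProb_of_mem_T ht b
  have hC (s : S) : |M.survivalProb b s| ≤ c := by
    rw [abs_of_nonneg (M.survivalProb_nonneg b s)]; exact hc s
  calc M.survivalProb (a + b) s = (M.P ^ a *ᵥ M.survivalProb b) s := by
        rw [survivalProb, pow_add, ← mulVec_mulVec]; rfl
    _ ≤ c * M.survivalProb a s := (le_abs_self _).trans (M.abs_pow_P_mulVec_le hv hC a s)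

theorem survivalProb_antitone (s : S) : Antitone fun n => M.survivalProb n s := by
  intro m n hmn
  obtain ⟨k, rfl⟩ := Nat.exists_eq_add_of_le hmn
  simpa using M.survivalProb_add_le (M.survivalProb_le_one k) m s

theorem survivalProb_le_pow_div {N : ℕ} {c : ℝ} (hc0 : 0 ≤ c)
    (hc : ∀ s, M.survivalProb N s ≤ c) (n : ℕ) (s : S) :
    M.survivalProb n s ≤ c ^ (n / N) := by
  suffices h : ∀ j r, M.survivalProb (r + j * N) s ≤ c ^ j by
    simpa [Nat.mod_add_div'] using h (n / N) (n % N)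
  intro j r
  induction j with
  | zero => simpa using M.survivalProb_le_one r s
  | succ j ih =>
    calc M.survivalProb (r + (j + 1) * N) s = M.survivalProb (r + j * N + N) s := by
          rw [add_mul, one_mul, add_assoc]
      _ ≤ c * M.survivalProb (r + j * N) s := M.survivalProb_add_le hc _ s
      _ ≤ c ^ (j + 1) := by rw [pow_succ']; exact mul_le_mul_of_nonneg_left ih hc0

theorem exists_survivalProb_lt_one {s : S} (hs : reaches M.edge (M.T : Set S) s) :
    ∃ n, M.survivalProb n s < 1 := by
  obtain ⟨n, t, ht, hpath⟩ := hs
  refine ⟨n, ?_⟩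
  have hsplit : M.survivalProb n s + (M.P ^ n *ᵥ (M.T : Set S).indicator 1) s = 1 := by
    rw [survivalProb, ← Pi.add_apply, ← mulVec_add, Set.indicator_compl_add_self,
      one_vecMul_of_mem_rowStochastic (pow_mem M.P_mem_rowStochastic n), Pi.one_apply]
  have hpos : 0 < (M.P ^ n *ᵥ (M.T : Set S).indicator 1) s := by
    refine (M.pow_P_apply_pos_of_pathLen hpath).trans_le ?_
    have hind : ∀ k, 0 ≤ (M.T : Set S).indicator (1 : S → ℝ) k :=
      Set.indicator_nonneg fun _ _ => zero_le_one
    simpa [ht, mulVec, dotProduct] using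
      Finset.single_le_sum (f := fun k => (M.P ^ n) s k * (M.T : Set S).indicator 1 k)
        (fun k _ => mul_nonneg (M.pow_P_apply_nonneg n s k) (hind k)) (Finset.mem_univ t)
  linarith

theorem exists_uniform_survivalProb_bound (hreach : ∀ s, reaches M.edge (M.T : Set S) s) :
    ∃ N c, 0 < N ∧ c < 1 ∧ ∀ s, M.survivalProb N s ≤ c := by
  have hN : ∀ᶠ N in atTop, 0 < N ∧ ∀ s, M.survivalProb N s < 1 := by
    refine (eventually_gt_atTop 0).and (eventually_all.2 fun s => ?_)
    obtain ⟨n, hn⟩ := M.exists_survivalProb_lt_one (hreach s)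
    exact eventually_atTop.2 ⟨n, fun m hm => (M.survivalProb_antitone s hm).trans_lt hn⟩
  obtain ⟨N, hN0, hN⟩ := hN.exists
  obtain ⟨c, hc, hc1⟩ :=
    ((eventually_all.2 fun s => Ioo_mem_nhdsLT (hN s)).and self_mem_nhdsWithin).exists
  exact ⟨N, c, hN0, hc1, fun s => (hc s).1.le⟩

theorem summable_survivalProb (hreach : ∀ s, reaches M.edge (M.T : Set S) s) (s : S) :
    Summable fun n => M.survivalProb n s := by
  obtain ⟨N, c, hN, hc1, hc⟩ := M.exists_uniform_survivalProb_bound hreach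
  have : NeZero N := ⟨hN.ne'⟩
  have hc0 : 0 ≤ c := (M.survivalProb_nonneg N s).trans (hc s)
  exact (summable_pow_div hc0 hc1 N).of_nonneg_of_le (M.survivalProb_nonneg · s)
    (M.survivalProb_le_pow_div hc0 hc · s)

theorem eq_zero_of_P_mulVec_eq_self (hreach : ∀ s, reaches M.edge (M.T : Set S) s) {d : S → ℝ}
    (hd : M.P *ᵥ d = d) (hT : ∀ t ∈ M.T, d t = 0) : d = 0 := by
  have hpow (n : ℕ) : M.P ^ n *ᵥ d = d := by
    induction n with
    | zero => exact one_mulVec d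
    | succ n ih => rw [pow_succ, ← mulVec_mulVec, hd, ih]
  have hC (s : S) : |d s| ≤ ∑ k, |d k| :=
    Finset.single_le_sum (fun k _ => abs_nonneg (d k)) (Finset.mem_univ s)
  funext s
  have hlim : Tendsto (fun n => (∑ k, |d k|) * M.survivalProb n s) atTop (𝓝 0) := by
    simpa using ((M.summable_survivalProb hreach s).tendsto_atTop_zero).const_mul (∑ k, |d k|)
  have hbound (n : ℕ) : |d s| ≤ (∑ k, |d k|) * M.survivalProb n s := by
    simpa [hpow n] using M.abs_pow_P_mulVec_le hT hC n s
  exact abs_nonpos_iff.1 (ge_of_tendsto' hlim hbound)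

variable (w : S → ℝ)

theorem sspUpdate_apply (v : S → ℝ) (s : S) :
    M.sspUpdate w v s = if s ∈ M.T then w s else w s + (M.P *ᵥ v) s :=
  rfl

theorem reachVal_eq_iSup (s : S) :
    M.reachVal w s = ⨆ n, (M.P ^ n *ᵥ (M.T : Set S).indicator w) s := by
  simp [reachVal, mulVec, dotProduct, Set.indicator_apply, mul_ite, Finset.sum_ite_mem]

theorem sspVal_eq_add : M.sspVal w =
    (fun s => ∑' n, (M.P ^ n *ᵥ (M.T : Set S)ᶜ.indicator w) s) + M.reachVal w := by
  funext s
  simp [sspVal, mulVec, dotProduct, Set.indicator_apply, mul_ite, Finset.sum_filter]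

variable {w}

theorem tendsto_pow_P_mulVec_reachVal (hw : ∀ s, 0 ≤ w s) :
    Tendsto (fun n => M.P ^ n *ᵥ (M.T : Set S).indicator w) atTop (𝓝 (M.reachVal w)) := by
  set u := (M.T : Set S).indicator w
  have hu : ∀ k, 0 ≤ u k := Set.indicator_nonneg fun k _ => hw k
  have hstep : ∀ k, 0 ≤ (M.P *ᵥ u - u) k := fun k => by
    by_cases hk : k ∈ M.T
    · simp [M.P_mulVec_apply_of_mem_T hk]
    · simpa [u, hk] using nonneg_mulVec_of_mem_rowStochastic M.P_mem_rowStochastic hu k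
  refine tendsto_pi_nhds.2 fun s => ?_
  rw [reachVal_eq_iSup]
  refine tendsto_atTop_ciSup (monotone_nat_of_le_succ fun n => ?_) ⟨∑ k, u k, ?_⟩
  · have := nonneg_mulVec_of_mem_rowStochastic (pow_mem M.P_mem_rowStochastic n) hstep s
    rw [mulVec_sub, mulVec_mulVec, ← pow_succ, Pi.sub_apply, sub_nonneg] at this
    exact this
  · rintro _ ⟨n, rfl⟩
    exact Finset.sum_le_sum fun k _ => mul_le_of_le_one_left (hu k)
      (le_one_of_mem_rowStochastic (pow_mem M.P_mem_rowStochastic n))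

theorem P_mulVec_reachVal (hw : ∀ s, 0 ≤ w s) : M.P *ᵥ M.reachVal w = M.reachVal w :=
  mulVec_eq_self_of_tendsto_pow_mulVec (M.tendsto_pow_P_mulVec_reachVal hw)

theorem reachVal_of_mem_T {t : S} (ht : t ∈ M.T) : M.reachVal w t = w t := by
  simp [reachVal_eq_iSup, M.pow_P_mulVec_apply_of_mem_T ht, ht]

theorem summable_pow_P_mulVec_indicator_compl (hreach : ∀ s, reaches M.edge (M.T : Set S) s)
    (s : S) : Summable fun n => (M.P ^ n *ᵥ (M.T : Set S)ᶜ.indicator w) s := by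
  have hv : ∀ t ∈ M.T, (M.T : Set S)ᶜ.indicator w t = 0 := fun t ht => by simp [ht]
  have hC (k : S) : |(M.T : Set S)ᶜ.indicator w k| ≤ ∑ j, |w j| := by
    refine (norm_indicator_le_norm_self (s := (M.T : Set S)ᶜ) (f := w) (a := k)).trans ?_
    exact Finset.single_le_sum (fun j _ => abs_nonneg (w j)) (Finset.mem_univ k)
  exact Summable.of_norm_bounded ((M.summable_survivalProb hreach s).mul_left _)
    (M.abs_pow_P_mulVec_le hv hC · s)

theorem sspUpdate_sspVal (hreach : ∀ s, reaches M.edge (M.T : Set S) s) (hw : ∀ s, 0 ≤ w s) :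
    M.sspUpdate w (M.sspVal w) = M.sspVal w := by
  funext s
  rw [sspUpdate_apply, sspVal_eq_add]
  split_ifs with hs
  · simp [M.pow_P_mulVec_apply_of_mem_T hs, hs, M.reachVal_of_mem_T hs]
  · have hR := congrFun (M.P_mulVec_reachVal hw) s
    rw [Pi.add_apply, tsum_pow_mulVec_apply (M.summable_pow_P_mulVec_indicator_compl hreach),
      mulVec_add, Pi.add_apply, Set.indicator_of_mem (by simpa using hs)]
    linarith

theorem eq_of_sspUpdate_eq_self (hreach : ∀ s, reaches M.edge (M.T : Set S) s) {u v : S → ℝ}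
    (hu : M.sspUpdate w u = u) (hv : M.sspUpdate w v = v) : u = v := by
  refine sub_eq_zero.1 (M.eq_zero_of_P_mulVec_eq_self hreach ?_ fun t ht => ?_)
  · funext s
    by_cases hs : s ∈ M.T
    · exact M.P_mulVec_apply_of_mem_T hs _
    · have hus := congrFun hu s
      have hvs := congrFun hv s
      simp only [sspUpdate_apply, hs, if_false] at hus hvs
      rw [mulVec_sub, Pi.sub_apply, Pi.sub_apply]
      linarith
  · have hut := congrFun hu t
    have hvt := congrFun hv t
    simp only [sspUpdate_apply, ht, if_true] at hut hvt
    rw [Pi.sub_apply]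
    linarith

end MC

theorem stmt_16_general {S : Type} [Fintype S] [DecidableEq S]
    (M : MC S) (hreach : ∀ a : S, reaches M.edge (M.T : Set S) a)
    (w : S → ℝ) (hw : ∀ a : S, 0 < w a) :
    ∀ v : S → ℝ, M.sspUpdate w v = v ↔ v = M.sspVal w := by
  have hfix := M.sspUpdate_sspVal hreach fun a => (hw a).le
  exact fun v => ⟨fun hv => M.eq_of_sspUpdate_eq_self hreach hv hfix, fun h => h ▸ hfix⟩

/-- If every state can reach `T` and weights are strictly positive,
then the SSP Bellman update has a unique fixpoint, and it equals the stochastic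
shortest path value vector. -/
theorem stmt_16 {S : Type} [Fintype S] [DecidableEq S] [Nonempty S]
    (M : MC S) (hreach : ∀ a : S, reaches M.edge (M.T : Set S) a)
    (w : S → ℝ) (hw : ∀ a : S, 0 < w a) :
    ∀ v : S → ℝ, M.sspUpdate w v = v ↔ v = M.sspVal w :=
  stmt_16_general M hreach w hw
end
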